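/- Let n ≥ 3 and let A be a symmetric n×n real matrix with A_{ii} = 0 for all i, ∑_{j=1}^n A_{ij} = 0 for all i, A not the zero matrix, and A_{ij} ≠ 0 whenever i ≠ j. Define W_{ijkl} = (A_{ij}/2)(δ_{ik}δ_{jl} − δ_{jk}δ_{il}). Then W has the symmetries of a Weyl tensor (antisymmetry in the first and last pairs, pair-exchange symmetry, trace-freeness, and the first Bianchi identity), and there exists a constant C > 0 such that ∑_{p,q=1}^n (h_{pq}(z))² ≥ C|z|⁴ for all z ∈ ℝⁿ, where h_{pq}(z) = (1/3)∑_{a,b=1}^n W_{paqb} z_a z_b. -/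

import Mathlib

noncomputable section

/-- The Euclidean space `ℝⁿ`. -/
abbrev En (n : ℕ) := EuclideanSpace ℝ (Fin n)

/-- `W` has the symmetries of a Weyl tensor. -/
def IsWeyl (n : ℕ) (W : Fin n → Fin n → Fin n → Fin n → ℝ) : Prop :=
  (∀ i j k l, W i j k l = -W j i k l) ∧
  (∀ i j k l, W i j k l = -W i j l k) ∧
  (∀ i j k l, W i j k l = W k l i j) ∧
  (∀ j l, ∑ i, W i j i l = 0) ∧
  (∀ i j k l, W i j k l + W j k i l + W k i j l = 0)

/-- The Kronecker symbol. -/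
def kron {n : ℕ} (i j : Fin n) : ℝ := if i = j then 1 else 0

/-! Contracting `W` twice with `z` gives `h_pq(z) = (δ_pq ∑_a A_pa z_a² - A_pq z_p z_q) / 6`.
If all `h_pq(z)` vanish, the off-diagonal entries force `z` to have a single nonzero coordinate
`z_i`, and then `h_pp(z) = A_pi z_i² / 6 ≠ 0` for any `p ≠ i`. So the quartic `∑ h_pq²` is
positive away from `0`, and being homogeneous of degree four it is bounded below by its minimum
on the unit sphere times `|z|⁴`. -/

open Finset

theorem exists_pos_mul_norm_pow_le_of_homogeneous {E : Type*} [NormedAddCommGroup E]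
    [NormedSpace ℝ E] [FiniteDimensional ℝ E] [Nontrivial E] {f : E → ℝ} {k : ℕ}
    (hf : Continuous f) (hhom : ∀ (c : ℝ) z, f (c • z) = c ^ k * f z)
    (hpos : ∀ z, z ≠ 0 → 0 < f z) :
    ∃ C, 0 < C ∧ ∀ z, C * ‖z‖ ^ k ≤ f z := by
  obtain ⟨u₀, hu₀, hmin⟩ := (isCompact_sphere (0 : E) 1).exists_isMinOn
    (NormedSpace.sphere_nonempty.2 zero_le_one) hf.continuousOn
  refine ⟨f u₀, hpos u₀ (ne_zero_of_mem_unit_sphere ⟨u₀, hu₀⟩), fun z => ?_⟩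
  obtain ⟨u, hu, hzu⟩ : ∃ u ∈ Metric.sphere (0 : E) 1, z = ‖z‖ • u := by
    rcases eq_or_ne z 0 with rfl | hz
    · exact ⟨u₀, hu₀, by simp⟩
    · refine ⟨‖z‖⁻¹ • z, by simpa using norm_smul_inv_norm (𝕜 := ℝ) hz, ?_⟩
      rw [smul_inv_smul₀ (norm_ne_zero_iff.2 hz)]
  calc f u₀ * ‖z‖ ^ k ≤ ‖z‖ ^ k * f u := by rw [mul_comm]; gcongr; exact hmin hu
    _ = f z := by rw [← hhom, ← hzu]

section Quartic

variable {n : ℕ}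

def weylContraction (W : Fin n → Fin n → Fin n → Fin n → ℝ) (z : Fin n → ℝ) (p q : Fin n) : ℝ :=
  ∑ a, ∑ b, W p a q b * z a * z b

def weylQuartic (W : Fin n → Fin n → Fin n → Fin n → ℝ) (z : En n) : ℝ :=
  ∑ p, ∑ q, ((1 / 3) * weylContraction W z p q) ^ 2

variable (W : Fin n → Fin n → Fin n → Fin n → ℝ)

theorem continuous_weylQuartic : Continuous (weylQuartic W) := by
  unfold weylQuartic weylContraction; fun_prop

theorem weylContraction_smul (c : ℝ) (z : Fin n → ℝ) (p q : Fin n) :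
    weylContraction W (c • z) p q = c ^ 2 * weylContraction W z p q := by
  simp only [weylContraction, Pi.smul_apply, smul_eq_mul, mul_sum]
  exact sum_congr rfl fun a _ => sum_congr rfl fun b _ => by ring

theorem weylQuartic_smul (c : ℝ) (z : En n) :
    weylQuartic W (c • z) = c ^ 4 * weylQuartic W z := by
  simp only [weylQuartic, WithLp.ofLp_smul, weylContraction_smul, mul_sum (a := c ^ 4)]
  exact sum_congr rfl fun p _ => sum_congr rfl fun q _ => by ring

theorem weylQuartic_pos_of_exists_ne_zero {z : En n} (h : ∃ p q, weylContraction W z p q ≠ 0) :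
    0 < weylQuartic W z := by
  obtain ⟨p, q, hpq⟩ := h
  refine sum_pos' (fun p _ => sum_nonneg fun q _ => sq_nonneg _) ⟨p, mem_univ p, ?_⟩
  exact sum_pos' (fun q _ => sq_nonneg _) ⟨q, mem_univ q, by positivity⟩

end Quartic

section KronWeyl

variable {n : ℕ}

def kronWeyl (A : Fin n → Fin n → ℝ) (i j k l : Fin n) : ℝ :=
  A i j / 2 * (kron i k * kron j l - kron j k * kron i l)

variable {A : Fin n → Fin n → ℝ}

theorem kronWeyl_swap_left (hsymm : ∀ i j, A i j = A j i) (i j k l : Fin n) :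
    kronWeyl A i j k l = -kronWeyl A j i k l := by
  rw [kronWeyl, kronWeyl, hsymm i j]; ring

theorem kronWeyl_swap_right (i j k l : Fin n) : kronWeyl A i j k l = -kronWeyl A i j l k := by
  rw [kronWeyl, kronWeyl]; ring

theorem kronWeyl_swap_pairs (hsymm : ∀ i j, A i j = A j i) (i j k l : Fin n) :
    kronWeyl A i j k l = kronWeyl A k l i j := by
  unfold kronWeyl kron; split_ifs <;> subst_vars <;> simp_all

theorem kronWeyl_bianchi (hsymm : ∀ i j, A i j = A j i) (i j k l : Fin n) :
    kronWeyl A i j k l + kronWeyl A j k i l + kronWeyl A k i j l = 0 := by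
  unfold kronWeyl kron; split_ifs <;> subst_vars <;> simp_all

theorem sum_kronWeyl_trace (hdiag : ∀ i, A i i = 0) (hcol : ∀ j, ∑ i, A i j = 0) (j l : Fin n) :
    ∑ i, kronWeyl A i j i l = 0 := by
  simp only [kronWeyl, kron, ↓reduceIte, mul_ite, mul_one, mul_zero, mul_sub, sum_sub_distrib,
    sum_ite_irrel, sum_const_zero, sum_ite_eq', mem_univ]
  split_ifs with hjl
  · rw [hjl, ← sum_div, hcol, hdiag]; ring
  · ring

theorem weylContraction_kronWeyl (z : Fin n → ℝ) (p q : Fin n) :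
    weylContraction (kronWeyl A) z p q
      = (if p = q then ∑ a, A p a / 2 * z a ^ 2 else 0) - A p q / 2 * z p * z q := by
  simp only [weylContraction, kronWeyl, kron, mul_ite, mul_one, mul_zero, mul_sub, sub_mul,
    ite_mul, zero_mul, sum_sub_distrib, sum_ite_eq, mem_univ, ↓reduceIte, sum_ite_irrel,
    sum_const_zero, sum_ite_eq']
  simp_rw [sq, mul_assoc]
  ring

theorem eq_zero_of_weylContraction_kronWeyl_eq_zero (hn : 1 < n)
    (hoff : ∀ i j, i ≠ j → A i j ≠ 0) {z : Fin n → ℝ}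
    (h : ∀ p q, weylContraction (kronWeyl A) z p q = 0) : z = 0 := by
  by_contra hz
  obtain ⟨i, hi⟩ : ∃ i, z i ≠ 0 := by simpa [funext_iff] using hz
  have hsupp : ∀ p, p ≠ i → z p = 0 := fun p hp => by
    have hpi := h p i
    rw [weylContraction_kronWeyl, if_neg hp] at hpi
    have : A p i * z p * z i = 0 := by linarith
    simpa [hoff p i hp, hi] using this
  obtain ⟨p, hp⟩ := Fintype.exists_ne_of_one_lt_card (by simpa using hn) i
  have hpp := h p p
  rw [weylContraction_kronWeyl, if_pos rfl, hsupp p hp,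
    sum_eq_single i (fun b _ hb => by rw [hsupp b hb]; ring) (by simp)] at hpp
  have : A p i * z i ^ 2 = 0 := by linarith
  simp [hoff p i hp, hi] at this

theorem weylQuartic_kronWeyl_pos (hn : 1 < n) (hoff : ∀ i j, i ≠ j → A i j ≠ 0) {z : En n}
    (hz : z ≠ 0) : 0 < weylQuartic (kronWeyl A) z := by
  refine weylQuartic_pos_of_exists_ne_zero _ ?_
  by_contra! h
  exact hz (by simpa using eq_zero_of_weylContraction_kronWeyl_eq_zero hn hoff h)

end KronWeyl

theorem stmt9 (n : ℕ) (hn : 3 ≤ n) (A : Fin n → Fin n → ℝ)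
    (hAsymm : ∀ i j, A i j = A j i)
    (hAdiag : ∀ i, A i i = 0)
    (hArow : ∀ i, ∑ j, A i j = 0)
    (hAoff : ∀ i j, i ≠ j → A i j ≠ 0)
    (W : Fin n → Fin n → Fin n → Fin n → ℝ)
    (hWdef : ∀ i j k l, W i j k l = A i j / 2 * (kron i k * kron j l - kron j k * kron i l)) :
    IsWeyl n W ∧
      ∃ C : ℝ, 0 < C ∧ ∀ z : En n,
        C * ‖z‖ ^ 4 ≤ ∑ p, ∑ q, ((1 / 3) * ∑ a, ∑ b, W p a q b * z a * z b) ^ 2 := by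
  obtain rfl : W = kronWeyl A := by ext i j k l; exact hWdef i j k l
  have hcol : ∀ j, ∑ i, A i j = 0 := fun j => by simpa only [hAsymm _ j] using hArow j
  have : NeZero n := ⟨by omega⟩
  exact ⟨⟨kronWeyl_swap_left hAsymm, kronWeyl_swap_right, kronWeyl_swap_pairs hAsymm,
      sum_kronWeyl_trace hAdiag hcol, kronWeyl_bianchi hAsymm⟩,
    exists_pos_mul_norm_pow_le_of_homogeneous (continuous_weylQuartic _) (weylQuartic_smul _)
      fun z hz => weylQuartic_kronWeyl_pos (by omega) hAoff hz⟩
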